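/- For any strictly increasing α : [m] → [n] with m ≥ 1, the m-fold iterate (ι_a ∘ π_b)^m applied to α equals the canonical inclusion [m] → [n], i ↦ i. -/
import Mathlib

/-- `ι_a` adds a minimal element (0-indexed). -/
def iotaA {m n : ℕ} (α : Fin m → Fin n) : Fin (m + 1) → Fin (n + 1) :=
  Fin.cases 0 (fun i => (α i).succ)

/-- `π_b` removes the maximal element (0-indexed). -/
def piB {m n : ℕ} (α : Fin (m + 1) → Fin (n + 1)) (hα : StrictMono α) : Fin m → Fin n :=
  fun i => (α i.castSucc).castPred
    (ne_of_lt (lt_of_lt_of_le (hα (Fin.castSucc_lt_last i)) (Fin.le_last _)))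

lemma strictMono_piB {m n : ℕ} (α : Fin (m + 1) → Fin (n + 1)) (hα : StrictMono α) :
    StrictMono (piB α hα) := by
  intro i j h
  simp only [piB, Fin.lt_def, Fin.coe_castPred]
  exact Fin.lt_def.mp (hα (Fin.castSucc_lt_castSucc_iff.mpr h))

lemma strictMono_iotaA {m n : ℕ} (α : Fin m → Fin n) (hα : StrictMono α) :
    StrictMono (iotaA α) := by
  intro i j h
  induction i using Fin.cases with
  | zero =>
    induction j using Fin.cases with
    | zero => exact absurd h (lt_irrefl _)
    | succ k => simpa [iotaA] using Fin.succ_pos (α k)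
  | succ k =>
    induction j using Fin.cases with
    | zero => exact absurd h (by simp [Fin.lt_def])
    | succ l =>
      simpa [iotaA, Fin.succ_lt_succ_iff] using hα (Fin.succ_lt_succ_iff.mp h)

/-- One application of `ι_a ∘ π_b` to a strictly increasing map `[m] → [n]`. -/
def stepT {m n : ℕ} (p : {f : Fin (m + 1) → Fin (n + 1) // StrictMono f}) :
    {f : Fin (m + 1) → Fin (n + 1) // StrictMono f} :=
  ⟨iotaA (piB p.1 p.2), strictMono_iotaA _ (strictMono_piB _ _)⟩

lemma stepT_val {m n : ℕ} (p : {f : Fin (m + 1) → Fin (n + 1) // StrictMono f})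
    (i : Fin (m + 1)) :
    (((stepT p).1 i : Fin (n+1)) : ℕ) =
      if h : (i : ℕ) = 0 then 0 else ((p.1 ⟨(i : ℕ) - 1, by omega⟩ : Fin (n+1)) : ℕ) + 1 := by
  induction i using Fin.cases with
  | zero => simp [stepT, iotaA]
  | succ k =>
    simp only [stepT, iotaA, Fin.cases_succ, Fin.val_succ, piB, Fin.coe_castPred]
    rw [dif_neg (by omega : ¬((k : ℕ) + 1 = 0))]
    congr 2


lemma iter_val {m n : ℕ} (α : Fin (m + 1) → Fin (n + 1)) (hα : StrictMono α)
    (k : ℕ) (i : Fin (m + 1)) :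
    (((stepT^[k] ⟨α, hα⟩).1 i : Fin (n+1)) : ℕ) =
      if (i : ℕ) < k then (i : ℕ) else ((α ⟨(i : ℕ) - k, by omega⟩ : Fin (n+1)) : ℕ) + k := by
  induction k generalizing i with
  | zero => simp
  | succ k ih =>
    rw [Function.iterate_succ_apply', stepT_val]
    by_cases h0 : (i : ℕ) = 0
    · simp [h0]
    · rw [dif_neg h0, ih]
      simp only [Fin.val_mk] at *
      by_cases h1 : (i : ℕ) - 1 < k
      · rw [if_pos h1, if_pos (by omega)]; omega
      · rw [if_neg h1, if_neg (by omega)]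
        have : (⟨(i:ℕ) - 1 - k, by omega⟩ : Fin (m+1)) = ⟨(i:ℕ) - (k+1), by omega⟩ := by
          congr 1; omega
        rw [this]; omega

/-- for a strictly increasing `α : [m] → [n]` with `m ≥ 1`, the `m`-fold
iterate of `ι_a ∘ π_b` applied to `α` is the canonical inclusion `[m] → [n]`, `i ↦ i`. -/
theorem iterate_iotaA_piB (m n : ℕ) (hmn : m ≤ n) (α : Fin (m + 1) → Fin (n + 1))
    (hα : StrictMono α) :
    (stepT^[m + 1] ⟨α, hα⟩).1 = fun i => Fin.castLE (by omega) i := by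
  funext i
  ext
  rw [iter_val]
  simp [i.isLt]
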